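/- When a quotient filter of 2^q slots is doubled to 2^{q+1} slots by setting the new quotient to the top q+1 bits of the same p-bit fingerprint (with p held fixed), every fingerprint's new quotient equals 2·(old quotient) + b where b is the top bit of the old remainder, and the new remainder equals the old remainder with its top bit removed; hence the fingerprint is unchanged, i.e. new_quotient · 2^{r−1} + new_remainder = old_quotient · 2^r + old_remainder = f. -/
import Mathlib


/-- Doubling a quotient filter: the new quotient is 2·(old quotient) plus the
top bit of the old remainder, the new remainder is the old remainder without
its top bit, and the fingerprint is unchanged. -/
theorem quotient_filter_doubling (p q : ℕ) (h : q + 1 ≤ p) (r : ℕ) (hr : r = p - q)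
    (f : ℕ) (hf : f < 2 ^ p) :
    f / 2 ^ (r - 1) = 2 * (f / 2 ^ r) + (f % 2 ^ r) / 2 ^ (r - 1) ∧
    f % 2 ^ (r - 1) = (f % 2 ^ r) % 2 ^ (r - 1) ∧
    (f / 2 ^ (r - 1)) * 2 ^ (r - 1) + f % 2 ^ (r - 1) = f ∧
    (f / 2 ^ r) * 2 ^ r + f % 2 ^ r = f := by
  have hr1 : r - 1 + 1 = r := by omega
  have h2 : 2 ^ r = 2 ^ (r - 1) * 2 := by rw [← pow_succ, hr1]
  refine ⟨?_, ?_, Nat.div_add_mod' f _, Nat.div_add_mod' f _⟩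
  · have e1 : f / 2 ^ r = f / 2 ^ (r - 1) / 2 := by
      rw [h2, Nat.div_div_eq_div_mul]
    have e2 : f % 2 ^ r / 2 ^ (r - 1) = f / 2 ^ (r - 1) % 2 := by
      rw [h2, Nat.mod_mul_right_div_self]
    rw [e1, e2]
    omega
  · exact (Nat.mod_mod_of_dvd f (by rw [h2]; exact Dvd.intro 2 rfl)).symm
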